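/- arXiv:1501.07414 — 2 statements merged into one kernel-verified Lean document; each statement's English description precedes it below -/
import Mathlib

section
/- If f̃ is the least-squares approximation of f on S̃ = S ∖ {λ}, i.e., removing the single interaction β^λ, then SSE(f, f̃) = β^λ · Σ_{x ∈ Ω_λ} (f(x) − f̃(x)). -/
open Finset

/-- The monomial `∏_{k ∈ Λ} x_k` for binary `x`. -/
noncomputable def mono {n : ℕ} (Λ : Finset (Fin n)) (x : Fin n → Bool) : ℝ :=
  ∏ k ∈ Λ, (if x k then (1 : ℝ) else 0)

/-- Binary polynomial represented on the family `S` with coefficients `β`. -/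
noncomputable def poly {n : ℕ} (S : Finset (Finset (Fin n))) (β : Finset (Fin n) → ℝ)
    (x : Fin n → Bool) : ℝ :=
  ∑ Λ ∈ S, β Λ * mono Λ x

/-- Error sum of squares between two pseudo-Boolean functions. -/
noncomputable def SSE {n : ℕ} (f g : (Fin n → Bool) → ℝ) : ℝ :=
  ∑ x : Fin n → Bool, (f x - g x) ^ 2

/-- `g` is the least-squares approximation of `f` represented on `S`. -/
def isLSA {n : ℕ} (S : Finset (Finset (Fin n))) (f g : (Fin n → Bool) → ℝ) : Prop :=
  (∃ β : Finset (Fin n) → ℝ, g = poly S β) ∧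
    ∀ γ : Finset (Fin n) → ℝ, SSE f g ≤ SSE f (poly S γ)

/-- `Ω_λ`: the binary vectors with `x_k = 1` for all `k ∈ λ`. -/
def Omega {n : ℕ} (lam : Finset (Fin n)) : Finset (Fin n → Bool) :=
  Finset.univ.filter (fun x => ∀ k ∈ lam, x k = true)

/-!
The residual `r = f - f̃` of a least-squares fit on `S̃` is orthogonal to every polynomial
represented on `S̃`: otherwise moving `f̃` a little in that direction would lower the error sum of
squares. Writing `r = β^λ · ∏_{k ∈ λ} x_k + p` with `p` represented on `S̃` gives
`SSE(f, f̃) = ⟨r, r⟩ = β^λ ⟨r, ∏_{k ∈ λ} x_k⟩`, and the monomial is the indicator of `Ω_λ`.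
-/

variable {n : ℕ}

lemma mono_eq_ite (lam : Finset (Fin n)) (x : Fin n → Bool) :
    mono lam x = if ∀ k ∈ lam, x k = true then 1 else 0 := by
  split_ifs with h
  · exact prod_eq_one fun k hk => by simp [h k hk]
  · push Not at h
    obtain ⟨k, hk, hxk⟩ := h
    exact prod_eq_zero hk (by simp [hxk])

lemma sum_mul_mono_eq_sum_Omega (g : (Fin n → Bool) → ℝ) (lam : Finset (Fin n)) :
    ∑ x, g x * mono lam x = ∑ x ∈ Omega lam, g x := by
  simp only [Omega, sum_filter, mono_eq_ite, mul_ite, mul_one, mul_zero]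

lemma poly_add (T : Finset (Finset (Fin n))) (γ δ : Finset (Fin n) → ℝ) :
    poly T (γ + δ) = poly T γ + poly T δ := by
  ext x
  simp only [poly, Pi.add_apply, add_mul, sum_add_distrib]

lemma poly_sub (T : Finset (Finset (Fin n))) (γ δ : Finset (Fin n) → ℝ) :
    poly T (γ - δ) = poly T γ - poly T δ := by
  ext x
  simp only [poly, Pi.sub_apply, sub_mul, sum_sub_distrib]

lemma poly_smul (T : Finset (Finset (Fin n))) (t : ℝ) (δ : Finset (Fin n) → ℝ) :
    poly T (t • δ) = t • poly T δ := by
  ext x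
  simp only [poly, Pi.smul_apply, smul_eq_mul, mul_sum, mul_assoc]

lemma poly_eq_add_poly_erase {S : Finset (Finset (Fin n))} {lam : Finset (Fin n)} (hlam : lam ∈ S)
    (β : Finset (Fin n) → ℝ) (x : Fin n → Bool) :
    poly S β x = β lam * mono lam x + poly (S.erase lam) β x :=
  (add_sum_erase S (fun Λ => β Λ * mono Λ x) hlam).symm

lemma SSE_add_smul (f g d : (Fin n → Bool) → ℝ) (t : ℝ) :
    SSE f (g + t • d) =
      (∑ x, d x ^ 2) * (t * t) + (-2 * ∑ x, (f x - g x) * d x) * t + SSE f g := by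
  simp only [SSE, Pi.add_apply, Pi.smul_apply, smul_eq_mul, sum_mul, mul_sum, ← sum_add_distrib]
  exact sum_congr rfl fun x _ => by ring

lemma isLSA.sum_sub_mul_poly_eq_zero {T : Finset (Finset (Fin n))} {f g : (Fin n → Bool) → ℝ}
    (h : isLSA T f g) (δ : Finset (Fin n) → ℝ) :
    ∑ x, (f x - g x) * poly T δ x = 0 := by
  obtain ⟨⟨γ, rfl⟩, hmin⟩ := h
  have hquad : ∀ t : ℝ, 0 ≤ (∑ x, poly T δ x ^ 2) * (t * t)
      + (-2 * ∑ x, (f x - poly T γ x) * poly T δ x) * t + 0 := fun t => by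
    have := hmin (γ + t • δ)
    rw [poly_add, poly_smul, SSE_add_smul] at this
    linarith
  have hdiscr := discrim_le_zero hquad
  rw [discrim] at hdiscr
  nlinarith [sq_nonneg (∑ x, (f x - poly T γ x) * poly T δ x)]

/-- Error sum of squares when removing a single interaction. -/
theorem sse_remove_one {n : ℕ} (S : Finset (Finset (Fin n)))
    (lam : Finset (Fin n)) (hlam : lam ∈ S) (β : Finset (Fin n) → ℝ)
    (ftil : (Fin n → Bool) → ℝ)
    (h : isLSA (S.erase lam) (poly S β) ftil) :
    SSE (poly S β) ftil = β lam * ∑ x ∈ Omega lam, (poly S β x - ftil x) := by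
  obtain ⟨γ, hγ⟩ := h.1
  set r := fun x => poly S β x - ftil x
  have hr : ∀ x, r x = β lam * mono lam x + poly (S.erase lam) (β - γ) x := fun x => by
    simp only [r, hγ, poly_sub, Pi.sub_apply, poly_eq_add_poly_erase hlam β x]
    ring
  calc SSE (poly S β) ftil
      = ∑ x, r x * (β lam * mono lam x + poly (S.erase lam) (β - γ) x) :=
        sum_congr rfl fun x _ => by rw [← hr, sq]
    _ = β lam * ∑ x, r x * mono lam x + ∑ x, r x * poly (S.erase lam) (β - γ) x := by
        simp only [mul_add, sum_add_distrib, mul_sum]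
        exact congrArg₂ _ (sum_congr rfl fun x _ => by ring) rfl
    _ = β lam * ∑ x ∈ Omega lam, r x := by
        rw [h.sum_sub_mul_poly_eq_zero, add_zero, sum_mul_mono_eq_sum_Omega]
end

section
/- (SOIR error formula) With f and its SOIR approximation f̃ removing all interactions containing both i and j as above, the pointwise error is f(x) − f̃(x) = (x_i x_j + 1/4 − x_i/2 − x_j/2) · Σ_{Λ ∈ S_{{i,j}}} β^Λ Π_{k ∈ Λ∖{i,j}} x_k for all x ∈ {0,1}^n. -/
/-!
Let `e = (x_i - 1/2)(x_j - 1/2) · q` with `q = Σ_{Λ ∈ S_{i,j}} β^Λ x^{Λ∖{i,j}}`, which depends on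
neither `x_i` nor `x_j`. Since `x_i x_j - (x_i - 1/2)(x_j - 1/2) = x_i/2 + x_j/2 - 1/4`, every
removed term of `f` minus its share of `e` is a combination of monomials of `S̃` (by density), so
`f - e` is representable on `S̃`. Flipping a coordinate `k ∈ {i, j}` that is missing from `λ ∈ S̃`
changes the sign of `e` but fixes `x^λ`, so `e` is orthogonal to everything representable on `S̃`.
By Pythagoras the least-squares approximation is then unique and equals `f - e`.
-/

open Finset

theorem dotProduct_eq_zero_of_perm {α R : Type*} [Fintype α] [CommRing R]
    [IsAddTorsionFree R] (σ : Equiv.Perm α) {e F : α → R} (he : ∀ x, e (σ x) = -e x)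
    (hF : ∀ x, F (σ x) = F x) : e ⬝ᵥ F = 0 := by
  have h := Equiv.sum_comp σ fun x => e x * F x
  simp only [he, hF, neg_mul, sum_neg_distrib] at h
  exact neg_eq_self.mp h

theorem eq_of_dotProduct_le_of_forall_dotProduct_eq_zero {α R : Type*} [Fintype α] [CommRing R]
    [LinearOrder R] [IsStrictOrderedRing R] {K : Submodule R (α → R)} {f g h : α → R}
    (hg : g ∈ K) (hh : h ∈ K) (horth : ∀ k ∈ K, (f - g) ⬝ᵥ k = 0)
    (hle : (f - h) ⬝ᵥ (f - h) ≤ (f - g) ⬝ᵥ (f - g)) : h = g := by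
  have hcross : (f - g) ⬝ᵥ (g - h) = 0 := horth _ (K.sub_mem hg hh)
  have hpyth : (f - h) ⬝ᵥ (f - h) = (f - g) ⬝ᵥ (f - g) + (g - h) ⬝ᵥ (g - h) := by
    have hfh : f - h = (f - g) + (g - h) := by abel
    rw [hfh, add_dotProduct, dotProduct_add, dotProduct_add, dotProduct_comm (g - h) (f - g),
      hcross]
    abel
  have hzero : (g - h) ⬝ᵥ (g - h) = 0 :=
    le_antisymm (by linarith) (sum_nonneg fun x _ => mul_self_nonneg _)
  exact (sub_eq_zero.mp (dotProduct_self_eq_zero.mp hzero)).symm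

section BinaryVectors

variable {ι : Type*} [DecidableEq ι]

def coord (x : ι → Bool) (k : ι) : ℝ := if x k then 1 else 0

def flipAt (k : ι) (x : ι → Bool) : ι → Bool := Function.update x k (!x k)

theorem flipAt_involutive (k : ι) : Function.Involutive (flipAt k) := fun x => by
  simp [flipAt]

theorem coord_flipAt_self (k : ι) (x : ι → Bool) : coord (flipAt k x) k = 1 - coord x k := by
  cases h : x k <;> simp [coord, flipAt, h]

theorem coord_flipAt_of_ne {k l : ι} (h : l ≠ k) (x : ι → Bool) :
    coord (flipAt k x) l = coord x l := by
  simp [coord, flipAt, h]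

noncomputable def soirFactor (i j : ι) (x : ι → Bool) : ℝ :=
  (coord x i - 1 / 2) * (coord x j - 1 / 2)

theorem soirFactor_flipAt {i j k : ι} (hij : i ≠ j)
    (hk : k ∈ ({i, j} : Finset ι)) (x : ι → Bool) :
    soirFactor i j (flipAt k x) = -soirFactor i j x := by
  rcases mem_insert.mp hk with rfl | hk
  · rw [soirFactor, soirFactor, coord_flipAt_self, coord_flipAt_of_ne hij.symm]; ring
  · rw [mem_singleton.mp hk, soirFactor, soirFactor, coord_flipAt_self,
      coord_flipAt_of_ne hij]; ring

end BinaryVectors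

section Monomials

variable {n : ℕ}

theorem mono_flipAt_of_notMem {Λ : Finset (Fin n)} {k : Fin n} (hk : k ∉ Λ)
    (x : Fin n → Bool) :
    mono Λ (flipAt k x) = mono Λ x :=
  prod_congr rfl fun _ hl => coord_flipAt_of_ne (ne_of_mem_of_not_mem hl hk) x

theorem mono_eq_coord_mul_erase {Λ : Finset (Fin n)} {k : Fin n} (hk : k ∈ Λ)
    (x : Fin n → Bool) :
    mono Λ x = coord x k * mono (Λ.erase k) x :=
  (mul_prod_erase Λ _ hk).symm

end Monomials

section PolySpan

variable {n : ℕ}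

noncomputable def polyLinearMap (S : Finset (Finset (Fin n))) :
    (Finset (Fin n) → ℝ) →ₗ[ℝ] (Fin n → Bool) → ℝ where
  toFun := poly S
  map_add' β γ := by ext x; simp only [poly, Pi.add_apply, add_mul, sum_add_distrib]
  map_smul' c β := by ext x; simp [poly, mul_sum, mul_assoc]

theorem poly_eq_sum_smul (S : Finset (Finset (Fin n))) (β : Finset (Fin n) → ℝ) :
    poly S β = ∑ Λ ∈ S, β Λ • mono Λ := by
  ext x; simp [poly, Finset.sum_apply]

theorem mono_mem_range_polyLinearMap {S : Finset (Finset (Fin n))} {Λ : Finset (Fin n)}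
    (hΛ : Λ ∈ S) : mono Λ ∈ LinearMap.range (polyLinearMap S) :=
  ⟨fun Λ' => if Λ' = Λ then 1 else 0, by ext x; simp [polyLinearMap, poly, hΛ]⟩

theorem dotProduct_poly_eq_zero {S : Finset (Finset (Fin n))} {e : (Fin n → Bool) → ℝ}
    (he : ∀ Λ ∈ S, e ⬝ᵥ mono Λ = 0) (γ : Finset (Fin n) → ℝ) : e ⬝ᵥ poly S γ = 0 := by
  rw [poly_eq_sum_smul, dotProduct_sum]
  exact sum_eq_zero fun Λ hΛ => by rw [dotProduct_smul, he Λ hΛ, smul_zero]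

theorem SSE_eq_dotProduct (f g : (Fin n → Bool) → ℝ) : SSE f g = (f - g) ⬝ᵥ (f - g) := by
  simp [SSE, dotProduct, sq]

end PolySpan

section Soir

variable {n : ℕ}

theorem mono_sub_soirFactor_mul {i j : Fin n} {Λ : Finset (Fin n)} (hij : i ≠ j)
    (hsub : {i, j} ⊆ Λ) (x : Fin n → Bool) :
    mono Λ x - soirFactor i j x * mono (Λ \ {i, j}) x =
      mono (Λ \ {j}) x / 2 + mono (Λ \ {i}) x / 2 - mono (Λ \ {i, j}) x / 4 := by
  have hi : i ∈ Λ.erase j := mem_erase.mpr ⟨hij, hsub (by simp)⟩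
  have hj : j ∈ Λ.erase i := mem_erase.mpr ⟨hij.symm, hsub (by simp)⟩
  rw [sdiff_insert, sdiff_singleton_eq_erase, sdiff_singleton_eq_erase,
    mono_eq_coord_mul_erase (mem_of_mem_erase hi), mono_eq_coord_mul_erase hi,
    mono_eq_coord_mul_erase hj, erase_right_comm, soirFactor]
  ring

noncomputable def soirError (S : Finset (Finset (Fin n))) (i j : Fin n)
    (β : Finset (Fin n) → ℝ) (x : Fin n → Bool) : ℝ :=
  soirFactor i j x * ∑ Λ ∈ S with {i, j} ⊆ Λ, β Λ * mono (Λ \ {i, j}) x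

theorem soirError_flipAt {S : Finset (Finset (Fin n))} {i j k : Fin n} (hij : i ≠ j)
    (hk : k ∈ ({i, j} : Finset (Fin n))) (β : Finset (Fin n) → ℝ) (x : Fin n → Bool) :
    soirError S i j β (flipAt k x) = -soirError S i j β x := by
  have hmono : ∀ Λ : Finset (Fin n), mono (Λ \ {i, j}) (flipAt k x) = mono (Λ \ {i, j}) x :=
    fun Λ => mono_flipAt_of_notMem (fun h => (mem_sdiff.mp h).2 hk) x
  simp only [soirError, soirFactor_flipAt hij hk, hmono, neg_mul]

theorem soirError_dotProduct_mono (S : Finset (Finset (Fin n))) {i j : Fin n} (hij : i ≠ j)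
    (β : Finset (Fin n) → ℝ) {Λ : Finset (Fin n)} (hΛ : ¬{i, j} ⊆ Λ) :
    soirError S i j β ⬝ᵥ mono Λ = 0 := by
  obtain ⟨k, hk, hkΛ⟩ := not_subset.mp hΛ
  exact dotProduct_eq_zero_of_perm (flipAt_involutive k).toPerm (soirError_flipAt hij hk β)
    (mono_flipAt_of_notMem hkΛ)

end Soir

section Representation

variable {n : ℕ} {S : Finset (Finset (Fin n))} {i j : Fin n}

theorem mono_sdiff_mem_range (hdense : ∀ Λ ∈ S, ∀ lam ⊆ Λ, lam ∈ S) {Λ s : Finset (Fin n)}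
    (hΛ : Λ ∈ S) {k : Fin n} (hks : k ∈ s) (hk : k ∈ ({i, j} : Finset (Fin n))) :
    mono (Λ \ s) ∈ LinearMap.range (polyLinearMap (S.filter fun Λ => ¬{i, j} ⊆ Λ)) :=
  mono_mem_range_polyLinearMap <| mem_filter.mpr
    ⟨hdense Λ hΛ _ sdiff_subset, fun h => (mem_sdiff.mp (h hk)).2 hks⟩

theorem mono_sub_soirFactor_mul_mem_range (hdense : ∀ Λ ∈ S, ∀ lam ⊆ Λ, lam ∈ S)
    (hij : i ≠ j) {Λ : Finset (Fin n)} (hΛ : Λ ∈ S) (hsub : {i, j} ⊆ Λ) :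
    mono Λ - soirFactor i j * mono (Λ \ {i, j}) ∈
      LinearMap.range (polyLinearMap (S.filter fun Λ => ¬{i, j} ⊆ Λ)) := by
  set K := LinearMap.range (polyLinearMap (S.filter fun Λ => ¬{i, j} ⊆ Λ))
  have hsplit : mono Λ - soirFactor i j * mono (Λ \ {i, j}) =
      (1 / 2 : ℝ) • mono (Λ \ {j}) + (1 / 2 : ℝ) • mono (Λ \ {i}) -
        (1 / 4 : ℝ) • mono (Λ \ {i, j}) := by
    ext x
    simp only [Pi.sub_apply, Pi.mul_apply, Pi.add_apply, Pi.smul_apply, smul_eq_mul,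
      mono_sub_soirFactor_mul hij hsub x]
    ring
  rw [hsplit]
  exact K.sub_mem
    (K.add_mem (K.smul_mem _ (mono_sdiff_mem_range hdense hΛ (mem_singleton_self j) (by simp)))
      (K.smul_mem _ (mono_sdiff_mem_range hdense hΛ (mem_singleton_self i) (by simp))))
    (K.smul_mem _ (mono_sdiff_mem_range hdense hΛ (mem_insert_self i {j}) (by simp)))

theorem soirError_eq_sum_smul (β : Finset (Fin n) → ℝ) :
    soirError S i j β =
      ∑ Λ ∈ S with {i, j} ⊆ Λ, β Λ • (soirFactor i j * mono (Λ \ {i, j})) := by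
  ext x
  simp only [soirError, mul_sum, Finset.sum_apply, Pi.smul_apply, Pi.mul_apply, smul_eq_mul]
  exact sum_congr rfl fun Λ _ => by ring

theorem poly_sub_soirError_mem_range (hdense : ∀ Λ ∈ S, ∀ lam ⊆ Λ, lam ∈ S)
    (hij : i ≠ j) (β : Finset (Fin n) → ℝ) :
    poly S β - soirError S i j β ∈
      LinearMap.range (polyLinearMap (S.filter fun Λ => ¬{i, j} ⊆ Λ)) := by
  set K := LinearMap.range (polyLinearMap (S.filter fun Λ => ¬{i, j} ⊆ Λ))
  rw [poly_eq_sum_smul, ← sum_filter_add_sum_filter_not S (fun Λ => {i, j} ⊆ Λ),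
    soirError_eq_sum_smul, add_sub_right_comm, ← sum_sub_distrib]
  refine K.add_mem (K.sum_mem fun Λ hΛ => ?_) (K.sum_mem fun Λ hΛ => ?_)
  · obtain ⟨hΛS, hsub⟩ := mem_filter.mp hΛ
    rw [← smul_sub]
    exact K.smul_mem _ (mono_sub_soirFactor_mul_mem_range hdense hij hΛS hsub)
  · exact K.smul_mem _ (mono_mem_range_polyLinearMap hΛ)

end Representation

theorem soir_error_general {n : ℕ} (S : Finset (Finset (Fin n)))
    (hdense : ∀ Λ ∈ S, ∀ lam ⊆ Λ, lam ∈ S)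
    (i j : Fin n) (hij : i ≠ j)
    (β : Finset (Fin n) → ℝ) (ftil : (Fin n → Bool) → ℝ)
    (h : isLSA (S.filter (fun Λ => ¬ ({i, j} : Finset (Fin n)) ⊆ Λ)) (poly S β) ftil) :
    ∀ x : Fin n → Bool,
      poly S β x - ftil x =
        ((if x i then (1 : ℝ) else 0) * (if x j then (1 : ℝ) else 0) + 1 / 4
            - (if x i then (1 : ℝ) else 0) / 2 - (if x j then (1 : ℝ) else 0) / 2) *
          ∑ Λ ∈ S.filter (fun Λ => ({i, j} : Finset (Fin n)) ⊆ Λ),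
            β Λ * mono (Λ \ {i, j}) x := by
  obtain ⟨⟨γ₀, rfl⟩, hmin⟩ := h
  have hproj := poly_sub_soirError_mem_range hdense hij β
  obtain ⟨γ, hγ : poly _ γ = _⟩ := id hproj
  have hfit : poly (S.filter fun Λ => ¬{i, j} ⊆ Λ) γ₀ = poly S β - soirError S i j β := by
    refine eq_of_dotProduct_le_of_forall_dotProduct_eq_zero (f := poly S β) hproj ⟨γ₀, rfl⟩
      ?_ ?_
    · rintro _ ⟨δ, rfl⟩
      rw [sub_sub_cancel]
      exact dotProduct_poly_eq_zero
        (fun Λ hΛ => soirError_dotProduct_mono S hij β (mem_filter.mp hΛ).2) δ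
    · simpa only [SSE_eq_dotProduct, ← hγ] using hmin γ
  intro x
  rw [hfit, Pi.sub_apply, sub_sub_cancel, soirError, soirFactor, coord, coord]
  ring

/-- Pointwise error of the SOIR approximation. -/
theorem soir_error {n : ℕ} (S : Finset (Finset (Fin n)))
    (hdense : ∀ Λ ∈ S, ∀ lam ⊆ Λ, lam ∈ S)
    (i j : Fin n) (hij : i ≠ j) (hmem : ({i, j} : Finset (Fin n)) ∈ S)
    (β : Finset (Fin n) → ℝ) (ftil : (Fin n → Bool) → ℝ)
    (h : isLSA (S.filter (fun Λ => ¬ ({i, j} : Finset (Fin n)) ⊆ Λ)) (poly S β) ftil) :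
    ∀ x : Fin n → Bool,
      poly S β x - ftil x =
        ((if x i then (1 : ℝ) else 0) * (if x j then (1 : ℝ) else 0) + 1 / 4
            - (if x i then (1 : ℝ) else 0) / 2 - (if x j then (1 : ℝ) else 0) / 2) *
          ∑ Λ ∈ S.filter (fun Λ => ({i, j} : Finset (Fin n)) ⊆ Λ),
            β Λ * mono (Λ \ {i, j}) x :=
  soir_error_general S hdense i j hij β ftil h
end
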